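/- Let Λ be a generalised Bratteli diagram of infinite depth and let l ∈ ℕ be such that o(e) ≤ l for every blue edge e. Then every infinite path x ∈ Λ^∞ satisfies σ^{l!·e₂}(x) = x. -/
import Mathlib


open scoped ENNReal

/-- A rank-2 graph (`2`-graph): a countable category whose morphisms (paths) carry a
degree functor `d : Path → ℕ × ℕ` satisfying the unique factorisation property.
Vertices are identified with the paths of degree `(0,0)`; composition is a total
function whose behaviour is constrained only on composable pairs (`s p = r q`). -/
structure TwoGraph where
  Path : Type
  countable : Countable Path
  d : Path → ℕ × ℕ
  r : Path → Path
  s : Path → Path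
  comp : Path → Path → Path
  d_r : ∀ p, d (r p) = 0
  d_s : ∀ p, d (s p) = 0
  r_vertex : ∀ p, d p = 0 → r p = p
  s_vertex : ∀ p, d p = 0 → s p = p
  id_comp : ∀ p, comp (r p) p = p
  comp_id : ∀ p, comp p (s p) = p
  r_comp : ∀ p q, s p = r q → r (comp p q) = r p
  s_comp : ∀ p q, s p = r q → s (comp p q) = s q
  d_comp : ∀ p q, s p = r q → d (comp p q) = d p + d q
  comp_assoc : ∀ p q t, s p = r q → s q = r t → comp (comp p q) t = comp p (comp q t)
  factor : ∀ (lam : Path) (m n : ℕ × ℕ), d lam = m + n →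
    ∃! mn : Path × Path,
      d mn.1 = m ∧ d mn.2 = n ∧ s mn.1 = r mn.2 ∧ comp mn.1 mn.2 = lam

namespace TwoGraph

variable (G : TwoGraph)

/-- Vertices are the paths of degree `0`. -/
def IsVertex (p : G.Path) : Prop := G.d p = 0

/-- A blue path: one whose degree lies in `ℕ e₁`. -/
def IsBlue (p : G.Path) : Prop := (G.d p).2 = 0

/-- A red path: one whose degree lies in `ℕ e₂`. -/
def IsRed (p : G.Path) : Prop := (G.d p).1 = 0

/-- A blue edge: a path of degree `e₁ = (1,0)`. -/
def IsBlueEdge (p : G.Path) : Prop := G.d p = (1, 0)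

/-- A red edge: a path of degree `e₂ = (0,1)`. -/
def IsRedEdge (p : G.Path) : Prop := G.d p = (0, 1)

/-- `Λ` is row-finite: `vΛⁿ` is finite for every vertex `v` and degree `n`. -/
def RowFinite : Prop :=
  ∀ (v : G.Path) (n : ℕ × ℕ), G.IsVertex v →
    {p : G.Path | G.r p = v ∧ G.d p = n}.Finite

/-- `Λ` is a finite `2`-graph: `Λⁿ` is finite for every degree `n`. -/
def FinitePaths : Prop := ∀ n : ℕ × ℕ, {p : G.Path | G.d p = n}.Finite

/-- `μ` is an initial segment of `lam`, i.e. `lam = μ ν` for some `ν`. -/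
def InitSeg (μ lam : G.Path) : Prop := ∃ ν, G.s μ = G.r ν ∧ G.comp μ ν = lam

/-- `μ` is a final segment of `lam`, i.e. `lam = ν μ` for some `ν`. -/
def FinalSeg (μ lam : G.Path) : Prop := ∃ ν, G.s ν = G.r μ ∧ G.comp ν μ = lam

/-- The vertex `v` lies on the path `lam`, i.e. `v = lam(n)` for some `0 ≤ n ≤ d lam`. -/
def OnPath (lam v : G.Path) : Prop :=
  G.IsVertex v ∧ ∃ μ, G.InitSeg μ lam ∧ G.s μ = v

/-- A cycle: `d lam ≠ 0`, `r lam = s lam`, and `lam(n) ≠ s lam` for `0 < n < d lam`. -/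
def IsCycle (lam : G.Path) : Prop :=
  G.d lam ≠ 0 ∧ G.r lam = G.s lam ∧
    ∀ μ, G.InitSeg μ lam → G.d μ ≠ 0 → G.d μ ≠ G.d lam → G.s μ ≠ G.s lam

/-- `lam` has no entrance: for `n ≤ d lam`, every path of degree `n` with range `r lam`
is the initial segment `lam(0,n)`. -/
def HasNoEntrance (lam : G.Path) : Prop :=
  ∀ n : ℕ × ℕ, n ≤ G.d lam → ∀ μ, G.d μ = n → G.r μ = G.r lam → G.InitSeg μ lam

/-- `lam` has no exit: for `n ≤ d lam`, every path of degree `n` with source `s lam`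
is the final segment `lam(d lam - n, d lam)`. -/
def HasNoExit (lam : G.Path) : Prop :=
  ∀ n : ℕ × ℕ, n ≤ G.d lam → ∀ μ, G.d μ = n → G.s μ = G.s lam → G.FinalSeg μ lam

/-- An isolated cycle: no entrances and no exits. -/
def IsIsolated (lam : G.Path) : Prop := G.HasNoEntrance lam ∧ G.HasNoExit lam

/-- An isolated cycle in the red graph. -/
def IsIsolatedRedCycle (lam : G.Path) : Prop :=
  G.IsRed lam ∧ G.IsCycle lam ∧ G.IsIsolated lam

/-- Condition (3.1): `Λ` is row-finite, the blue graph contains no cycles, and each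
vertex is the range of an isolated cycle in the red graph. -/
def Cond31 : Prop :=
  G.RowFinite ∧ (∀ p, G.IsBlue p → ¬ G.IsCycle p) ∧
    ∀ v, G.IsVertex v → ∃ lam, G.IsIsolatedRedCycle lam ∧ G.r lam = v

/-- A source of the blue graph: a vertex receiving no blue edges. -/
def IsBlueSource (v : G.Path) : Prop :=
  G.IsVertex v ∧ ∀ e, G.IsBlueEdge e → G.r e ≠ v

/-- A sink of the blue graph: a vertex emitting no blue edges. -/
def IsBlueSink (v : G.Path) : Prop :=
  G.IsVertex v ∧ ∀ e, G.IsBlueEdge e → G.s e ≠ v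

/-- `Λ^{≤ n}`. -/
def LeSet (n : ℕ × ℕ) : Set G.Path :=
  {lam | G.d lam ≤ n ∧
    ∀ μ, G.s lam = G.r μ → G.comp lam μ ≠ lam → ¬ G.d (G.comp lam μ) ≤ n}

/-- `IsSwap ρ τ τ' ρ'` says that `(τ', ρ') = 𝓕(ρ, τ)` is the factorisation of `ρτ`
with the degrees in the reversed order: `τ'ρ' = ρτ`, `d τ' = d τ` and `d ρ' = d ρ`. -/
def IsSwap (ρ τ τ' ρ' : G.Path) : Prop :=
  G.s ρ = G.r τ ∧ G.s τ' = G.r ρ' ∧ G.d τ' = G.d τ ∧ G.d ρ' = G.d ρ ∧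
    G.comp τ' ρ' = G.comp ρ τ

/-- The edge `e` occurs at position `n` in the red path `μ`. -/
def OccAt (μ e : G.Path) (n : ℕ) : Prop :=
  ∃ ρ ξ, G.d ρ = (0, n) ∧ G.s ρ = G.r e ∧ G.s e = G.r ξ ∧
    G.comp ρ (G.comp e ξ) = μ

/-- `⟨μ, e⟩`: the number of occurrences of the red edge `e` in the red path `μ`. -/
noncomputable def occCount (μ e : G.Path) : ℕ :=
  Nat.card {n : ℕ // G.OccAt μ e n}

/-- Membership in `Y = (blue Λ)S`: a blue path whose source is a source of the
blue graph. -/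
def InY (α : G.Path) : Prop := G.IsBlue α ∧ G.IsBlueSource (G.s α)

/-- One step of the factorisation permutation `𝓕` of the blue paths of a GBD:
`α' = 𝓕(α)` iff `f α = α' f'` for (the) red edges `f, f'` with `s f = r α`. -/
def FStep (α α' : G.Path) : Prop :=
  G.IsBlue α ∧ G.IsBlue α' ∧
    ∃ f f', G.IsRedEdge f ∧ G.IsRedEdge f' ∧ G.s f = G.r α ∧ G.s α' = G.r f' ∧
      G.comp f α = G.comp α' f'

end TwoGraph

/-- `k`-fold iteration of the factorisation permutation, as a relation. -/
def TwoGraph.FIter (G : TwoGraph) : ℕ → G.Path → G.Path → Prop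
  | 0, α, α' => α = α'
  | k + 1, α, α' => ∃ β, G.FStep α β ∧ TwoGraph.FIter G k β α'

namespace TwoGraph

variable (G : TwoGraph)

/-- `o(α) = k`: `k` is the order of the blue path `α` under the factorisation
permutation `𝓕`. -/
def HasOrder (α : G.Path) (k : ℕ) : Prop :=
  0 < k ∧ G.FIter k α α ∧ ∀ m, 0 < m → m < k → ¬ G.FIter m α α

end TwoGraph

/-- `IsChainComp [e₁, …, eₙ] β` says `β = e₁ e₂ ⋯ eₙ`. -/
def TwoGraph.IsChainComp (G : TwoGraph) : List G.Path → G.Path → Prop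
  | [], β => G.IsVertex β
  | e :: l, β => ∃ γ, TwoGraph.IsChainComp G l γ ∧ G.s e = G.r γ ∧ β = G.comp e γ

/-- `cyclePow lam m = lam^m`, the `m`-fold concatenation of the cycle `lam`,
with `lam^0 = s lam`. -/
def TwoGraph.cyclePow (G : TwoGraph) (lam : G.Path) : ℕ → G.Path
  | 0 => G.s lam
  | m + 1 => G.comp lam (TwoGraph.cyclePow G lam m)

namespace TwoGraph

variable (G : TwoGraph)

/-! ### Relative (sub-2-graph) versions of the basic notions -/

/-- `μ` is an initial segment of `lam` within `P`. -/
def InitSegIn (P : Set G.Path) (μ lam : G.Path) : Prop :=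
  ∃ ν ∈ P, G.s μ = G.r ν ∧ G.comp μ ν = lam

/-- `μ` is a final segment of `lam` within `P`. -/
def FinalSegIn (P : Set G.Path) (μ lam : G.Path) : Prop :=
  ∃ ν ∈ P, G.s ν = G.r μ ∧ G.comp ν μ = lam

/-- A cycle of the sub-2-graph with path-set `P`. -/
def IsCycleIn (P : Set G.Path) (lam : G.Path) : Prop :=
  lam ∈ P ∧ G.d lam ≠ 0 ∧ G.r lam = G.s lam ∧
    ∀ μ ∈ P, G.InitSegIn P μ lam → G.d μ ≠ 0 → G.d μ ≠ G.d lam → G.s μ ≠ G.s lam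

def HasNoEntranceIn (P : Set G.Path) (lam : G.Path) : Prop :=
  ∀ n : ℕ × ℕ, n ≤ G.d lam → ∀ μ ∈ P, G.d μ = n → G.r μ = G.r lam → G.InitSegIn P μ lam

def HasNoExitIn (P : Set G.Path) (lam : G.Path) : Prop :=
  ∀ n : ℕ × ℕ, n ≤ G.d lam → ∀ μ ∈ P, G.d μ = n → G.s μ = G.s lam → G.FinalSegIn P μ lam

/-- An isolated cycle of the red graph of the sub-2-graph with path-set `P`. -/
def IsIsolatedRedCycleIn (P : Set G.Path) (lam : G.Path) : Prop :=
  lam ∈ P ∧ G.IsRed lam ∧ G.IsCycleIn P lam ∧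
    G.HasNoEntranceIn P lam ∧ G.HasNoExitIn P lam

def RowFiniteIn (P : Set G.Path) : Prop :=
  ∀ (v : G.Path) (n : ℕ × ℕ), G.IsVertex v →
    {p : G.Path | p ∈ P ∧ G.r p = v ∧ G.d p = n}.Finite

/-- A source of the blue graph of the sub-2-graph with path-set `P`. -/
def IsBlueSourceIn (P : Set G.Path) (v : G.Path) : Prop :=
  v ∈ P ∧ G.IsVertex v ∧ ∀ e ∈ P, G.IsBlueEdge e → G.r e ≠ v

/-- Condition (3.1) for the sub-2-graph with path-set `P`. -/
def Cond31In (P : Set G.Path) : Prop :=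
  G.RowFiniteIn P ∧ (∀ p ∈ P, G.IsBlue p → ¬ G.IsCycleIn P p) ∧
    ∀ v ∈ P, G.IsVertex v → ∃ lam, G.IsIsolatedRedCycleIn P lam ∧ G.r lam = v

/-- `Λ_j = {λ ∈ Λ : s(λ) Λ W ≠ ∅}`: the paths admitting a path from their source
into the vertex set `W`. -/
def subGraphTo (W : Set G.Path) : Set G.Path :=
  {p | ∃ μ, G.r μ = G.s p ∧ G.s μ ∈ W}

/-- `Λ` has large-permutation factorisations. -/
def HasLPF : Prop :=
  ∀ v, G.IsVertex v → ∀ l : ℕ, 0 < l → ∃ N : ℕ,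
    ∀ α, G.IsBlue α → G.r α = v → G.d α = (N, 0) →
      ∀ k, G.HasOrder α k → l < k

end TwoGraph

/-- A generalised Bratteli diagram of depth `N ∈ ℕ ∪ {∞}` with vertex decomposition
`Λ⁰ = ⊔ₙ V n`. -/
structure IsGBD (G : TwoGraph) (N : ℕ∞) (V : ℕ → Set G.Path) : Prop where
  rowFinite : G.RowFinite
  level_nonempty : ∀ n : ℕ, (n : ℕ∞) ≤ N → (V n).Nonempty
  level_finite : ∀ n : ℕ, (V n).Finite
  level_empty : ∀ n : ℕ, ¬ ((n : ℕ∞) ≤ N) → V n = ∅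
  level_vertex : ∀ n, V n ⊆ {v | G.IsVertex v}
  cover : ∀ v, G.IsVertex v → ∃ n, v ∈ V n
  level_disjoint : ∀ m n, m ≠ n → Disjoint (V m) (V n)
  blue_level : ∀ e, G.IsBlueEdge e → ∃ n, G.r e ∈ V n ∧ G.s e ∈ V (n + 1)
  sinks_bottom : ∀ v, G.IsBlueSink v → v ∈ V 0
  sources_top : ∀ v, G.IsBlueSource v → ∃ n : ℕ, (n : ℕ∞) = N ∧ v ∈ V n
  red_cycle : ∀ v, G.IsVertex v → ∃ lam, G.IsIsolatedRedCycle lam ∧ G.r lam = v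
  red_level : ∀ f, G.IsRedEdge f → ∃ n, G.r f ∈ V n ∧ G.s f ∈ V n

/-- The sub-2-graph `Λ_N` of paths joining vertices in the first `N` levels. -/
def levelPaths (G : TwoGraph) (V : ℕ → Set G.Path) (N : ℕ) : Set G.Path :=
  {p | (∃ n ≤ N, G.r p ∈ V n) ∧ (∃ n ≤ N, G.s p ∈ V n)}

/-- An infinite path in a 2-graph: a degree-preserving functor `Ω₂ → Λ`, recorded by
its segments `x(m,n)` for `m ≤ n` in `ℕ × ℕ`. -/
structure InfPath (G : TwoGraph) where
  seg : ℕ × ℕ → ℕ × ℕ → G.Path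
  deg : ∀ m n : ℕ × ℕ, m ≤ n → G.d (seg m n) = n - m
  range_seg : ∀ m n : ℕ × ℕ, m ≤ n → G.r (seg m n) = seg m m
  source_seg : ∀ m n : ℕ × ℕ, m ≤ n → G.s (seg m n) = seg n n
  comp_seg : ∀ m n p : ℕ × ℕ, m ≤ n → n ≤ p → G.comp (seg m n) (seg n p) = seg m p

/-- A Cuntz–Krieger `Λ`-family in a C*-algebra `A`. -/
structure CKFamily (G : TwoGraph) (A : Type*) [CStarAlgebra A] where
  S : G.Path → A
  ck1_sa : ∀ v, G.IsVertex v → star (S v) = S v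
  ck1_idem : ∀ v, G.IsVertex v → S v * S v = S v
  ck1_orth : ∀ v w, G.IsVertex v → G.IsVertex w → v ≠ w → S v * S w = 0
  ck2 : ∀ p q, G.s p = G.r q → S p * S q = S (G.comp p q)
  ck3 : ∀ p, star (S p) * S p = S (G.s p)
  ck4 : ∀ (v : G.Path) (n : ℕ × ℕ), G.IsVertex v →
    S v = ∑ᶠ lam ∈ {lam : G.Path | lam ∈ G.LeSet n ∧ G.r lam = v},
      S lam * star (S lam)

section CStar

variable {A : Type*} [CStarAlgebra A]

/-- The C*-subalgebra (as a subset) of `A` generated by a set `SS`. -/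
def generatedCStar (SS : Set A) : Set A :=
  closure (NonUnitalStarAlgebra.adjoin ℂ SS : Set A)

/-- `P` is full in the C*-algebra `Bset ⊆ A`: every closed two-sided ideal of `Bset`
containing `P` is all of `Bset`. -/
def FullIn (Bset : Set A) (P : A) : Prop :=
  ∀ I : Set A, I ⊆ Bset → IsClosed I →
    (∀ x ∈ I, ∀ y ∈ I, x + y ∈ I) → (∀ (c : ℂ), ∀ x ∈ I, c • x ∈ I) →
    (∀ a ∈ Bset, ∀ x ∈ I, a * x ∈ I ∧ x * a ∈ I) →
    P ∈ I → Bset ⊆ I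

/-- The sum `∑_{v ∈ Λ⁰} s_v`, which is the unit of `C*(Λ)` for finite `Λ`. -/
noncomputable def ckUnit (G : TwoGraph) (F : CKFamily G A) : A :=
  ∑ᶠ v ∈ {v : G.Path | G.IsVertex v}, F.S v

/-- The canonical unitary `U = ∑_{α ∈ Y} s_α s_{λ(α)} s_α*`. -/
noncomputable def ckU (G : TwoGraph) (F : CKFamily G A) (lam : G.Path → G.Path) : A :=
  ∑ᶠ α ∈ {α : G.Path | G.InY α}, F.S α * F.S (lam α) * star (F.S α)

/-- The gauge action: for every `z ∈ 𝕋²` there is a *-automorphism `γ_z` of the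
C*-subalgebra generated by the family with `γ_z(s_λ) = z^{d(λ)} s_λ`. -/
def GaugeInvariant (G : TwoGraph) (F : CKFamily G A) : Prop :=
  ∀ z₁ z₂ : ℂ, ‖z₁‖ = 1 → ‖z₂‖ = 1 → ∃ γ : A → A,
    Set.BijOn γ (generatedCStar (Set.range F.S)) (generatedCStar (Set.range F.S)) ∧
    (∀ x ∈ generatedCStar (Set.range F.S), ∀ y ∈ generatedCStar (Set.range F.S),
      γ (x + y) = γ x + γ y ∧ γ (x * y) = γ x * γ y) ∧
    (∀ x ∈ generatedCStar (Set.range F.S), γ (star x) = star (γ x)) ∧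
    (∀ (c : ℂ), ∀ x ∈ generatedCStar (Set.range F.S), γ (c • x) = c • γ x) ∧
    (∀ p : G.Path, γ (F.S p) = (z₁ ^ (G.d p).1 * z₂ ^ (G.d p).2) • F.S p)

end CStar


/-! ### Auxiliary lemmas for Statement 15 -/

namespace TwoGraph

variable {G : TwoGraph}

lemma aux_le_addp (m p : ℕ × ℕ) : m ≤ m + p := by
  simp [Prod.le_def]

lemma aux_add_sub (m p : ℕ × ℕ) : m + p - m = p := by
  cases m; cases p; simp [Prod.ext_iff]

lemma aux_isVertex_r (p : G.Path) : G.IsVertex (G.r p) := G.d_r p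

/-- Helper: a red cycle has degree `(0, c)` with `c > 0`, so `(0,1) ≤ d lam`. -/
lemma aux_e2_le {lam : G.Path} (hr : G.IsRed lam) (hne : G.d lam ≠ 0) :
    ((0 : ℕ), (1 : ℕ)) ≤ G.d lam := by
  rcases h : G.d lam with ⟨a, b⟩
  have ha : a = 0 := by have := hr; rw [TwoGraph.IsRed, h] at this; exact this
  have hb : b ≠ 0 := by
    intro hb; apply hne; rw [h, ha, hb]; rfl
  simp [Prod.le_def, ha]; omega

/-- Two red edges with the same (vertex) range are equal. -/
lemma red_range_unique
    (hred : ∀ v, G.IsVertex v → ∃ lam, G.IsIsolatedRedCycle lam ∧ G.r lam = v)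
    {v f₁ f₂ : G.Path} (hv : G.IsVertex v)
    (h₁ : G.IsRedEdge f₁) (h₂ : G.IsRedEdge f₂)
    (hr₁ : G.r f₁ = v) (hr₂ : G.r f₂ = v) : f₁ = f₂ := by
  obtain ⟨lam, ⟨hredl, hcyc, hne, _hnx⟩, hrl⟩ := hred v hv
  have hle : ((0 : ℕ), (1 : ℕ)) ≤ G.d lam := aux_e2_le hredl hcyc.1
  obtain ⟨ν₁, hs₁, hc₁⟩ := hne (0, 1) hle f₁ h₁ (by rw [hr₁, hrl])
  obtain ⟨ν₂, hs₂, hc₂⟩ := hne (0, 1) hle f₂ h₂ (by rw [hr₂, hrl])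
  have hdeq : G.d lam = (0, 1) + (G.d lam - (0, 1)) := by
    rcases hle with ⟨hle1, hle2⟩
    rcases h : G.d lam with ⟨a, b⟩
    rw [h] at hle2
    simp at hle2 ⊢
    omega
  obtain ⟨mn, _, huniq⟩ := G.factor lam (0, 1) (G.d lam - (0, 1)) hdeq
  have key : ∀ (f ν : G.Path), G.IsRedEdge f → G.s f = G.r ν → G.comp f ν = lam →
      (f, ν) = mn := by
    intro f ν hf hs hc
    refine huniq (f, ν) ⟨hf, ?_, hs, hc⟩
    have hd : G.d lam = G.d f + G.d ν := by rw [← hc]; exact G.d_comp f ν hs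
    rw [hf] at hd
    rcases hdl : G.d lam with ⟨a, b⟩
    rcases hdn : G.d ν with ⟨p, q⟩
    rw [hdl, hdn] at hd
    rw [hdl] at hle
    rcases hle with ⟨hle1, hle2⟩
    simp at hd hle2 ⊢
    omega
  have e1 := key f₁ ν₁ h₁ hs₁ hc₁
  have e2 := key f₂ ν₂ h₂ hs₂ hc₂
  have : (f₁, ν₁) = (f₂, ν₂) := e1.trans e2.symm
  exact congrArg Prod.fst this

/-- Two red edges with the same (vertex) source are equal. -/
lemma red_source_unique
    (hred : ∀ v, G.IsVertex v → ∃ lam, G.IsIsolatedRedCycle lam ∧ G.r lam = v)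
    {v f₁ f₂ : G.Path} (hv : G.IsVertex v)
    (h₁ : G.IsRedEdge f₁) (h₂ : G.IsRedEdge f₂)
    (hs₁ : G.s f₁ = v) (hs₂ : G.s f₂ = v) : f₁ = f₂ := by
  obtain ⟨lam, ⟨hredl, hcyc, _hne, hnx⟩, hrl⟩ := hred v hv
  have hsl : G.s lam = v := by rw [← hcyc.2.1, hrl]
  have hle : ((0 : ℕ), (1 : ℕ)) ≤ G.d lam := aux_e2_le hredl hcyc.1
  obtain ⟨ν₁, hv₁, hc₁⟩ := hnx (0, 1) hle f₁ h₁ (by rw [hs₁, hsl])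
  obtain ⟨ν₂, hv₂, hc₂⟩ := hnx (0, 1) hle f₂ h₂ (by rw [hs₂, hsl])
  have hdeq : G.d lam = (G.d lam - (0, 1)) + (0, 1) := by
    rcases hle with ⟨hle1, hle2⟩
    rcases h : G.d lam with ⟨a, b⟩
    rw [h] at hle2
    simp at hle2 ⊢
    omega
  obtain ⟨mn, _, huniq⟩ := G.factor lam (G.d lam - (0, 1)) (0, 1) hdeq
  have key : ∀ (ν f : G.Path), G.IsRedEdge f → G.s ν = G.r f → G.comp ν f = lam →
      (ν, f) = mn := by
    intro ν f hf hs hc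
    refine huniq (ν, f) ⟨?_, hf, hs, hc⟩
    have hd : G.d lam = G.d ν + G.d f := by rw [← hc]; exact G.d_comp ν f hs
    rw [hf] at hd
    rcases hdl : G.d lam with ⟨a, b⟩
    rcases hdn : G.d ν with ⟨p, q⟩
    rw [hdl, hdn] at hd
    rw [hdl] at hle
    rcases hle with ⟨hle1, hle2⟩
    simp at hd hle2 ⊢
    omega
  have e1 := key ν₁ f₁ h₁ hv₁ hc₁
  have e2 := key ν₂ f₂ h₂ hv₂ hc₂
  have : (ν₁, f₁) = (ν₂, f₂) := e1.trans e2.symm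
  exact congrArg Prod.snd this

/-- The factorisation step is deterministic. -/
lemma fstep_det
    (hred : ∀ v, G.IsVertex v → ∃ lam, G.IsIsolatedRedCycle lam ∧ G.r lam = v)
    {α β β' : G.Path} (h : G.FStep α β) (h' : G.FStep α β') : β = β' := by
  obtain ⟨hbα, hbβ, f, f', hf, hf', hsf, hsβ, hcomp⟩ := h
  obtain ⟨_, hbβ', g, g', hg, hg', hsg, hsβ', hcomp'⟩ := h'
  have hfg : f = g :=
    red_source_unique hred (aux_isVertex_r α) hf hg hsf hsg
  subst hfg
  have hd : G.d (G.comp f α) = G.d α + (0, 1) := by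
    rw [G.d_comp f α hsf, hf, add_comm]
  obtain ⟨mn, _, huniq⟩ := G.factor (G.comp f α) (G.d α) (0, 1) hd
  have key : ∀ (b b' : G.Path), G.IsBlue b → G.IsRedEdge b' → G.s b = G.r b' →
      G.comp b b' = G.comp f α → (b, b') = mn := by
    intro b b' hb hb' hs hc
    refine huniq (b, b') ⟨?_, hb', hs, hc⟩
    have : G.d b + G.d b' = G.d α + (0, 1) := by
      rw [← G.d_comp b b' hs, hc, hd]
    rw [hb'] at this
    rcases hdb : G.d b with ⟨p, q⟩
    rcases hda : G.d α with ⟨a, c⟩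
    rw [hdb, hda] at this
    simp [Prod.ext_iff] at this ⊢
    omega
  have e1 := key β f' hbβ hf' hsβ hcomp.symm
  have e2 := key β' g' hbβ' hg' hsβ' hcomp'.symm
  exact congrArg Prod.fst (e1.trans e2.symm)

lemma fiter_comp :
    ∀ (a : ℕ) {b : ℕ} {α β γ : G.Path},
      G.FIter a α β → G.FIter b β γ → G.FIter (a + b) α γ
  | 0, b, α, β, γ, h, h' => by
      have : α = β := h
      subst this
      rw [Nat.zero_add]
      exact h'
  | a + 1, b, α, β, γ, h, h' => by
      obtain ⟨δ, hs, ht⟩ := h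
      have hrec := fiter_comp a ht h'
      show G.FIter (a + 1 + b) α γ
      have : a + 1 + b = (a + b) + 1 := by omega
      rw [this]
      exact ⟨δ, hs, hrec⟩

lemma fiter_det
    (hred : ∀ v, G.IsVertex v → ∃ lam, G.IsIsolatedRedCycle lam ∧ G.r lam = v) :
    ∀ (n : ℕ) {α β β' : G.Path}, G.FIter n α β → G.FIter n α β' → β = β'
  | 0, α, β, β', h, h' => by
      have h1 : α = β := h
      have h2 : α = β' := h'
      exact h1 ▸ h2
  | n + 1, α, β, β', h, h' => by
      obtain ⟨δ, hs, ht⟩ := h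
      obtain ⟨δ', hs', ht'⟩ := h'
      have : δ = δ' := fstep_det hred hs hs'
      subst this
      exact fiter_det hred n ht ht'

lemma fiter_self_mul {α : G.Path} {k : ℕ} (h : G.FIter k α α) :
    ∀ t : ℕ, G.FIter (k * t) α α
  | 0 => rfl
  | t + 1 => by
      have : k * (t + 1) = k * t + k := by ring
      rw [this]
      exact fiter_comp (k * t) (fiter_self_mul h t) h

end TwoGraph

section Stmt15Aux

variable {G : TwoGraph} (x : InfPath G)

lemma seg_vertex (m : ℕ × ℕ) : G.IsVertex (x.seg m m) := by
  have := x.deg m m le_rfl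
  rw [TwoGraph.IsVertex, this]
  cases m; simp [Prod.ext_iff] <;> omega

lemma seg_d_add (m p : ℕ × ℕ) : G.d (x.seg m (m + p)) = p := by
  rw [x.deg m (m + p) (TwoGraph.aux_le_addp m p), TwoGraph.aux_add_sub]

lemma seg_red_edge (m : ℕ × ℕ) : G.IsRedEdge (x.seg m (m + (0, 1))) := seg_d_add x m (0, 1)

lemma seg_blue_edge (m : ℕ × ℕ) : G.IsBlueEdge (x.seg m (m + (1, 0))) := seg_d_add x m (1, 0)

lemma seg_r_add (m p : ℕ × ℕ) : G.r (x.seg m (m + p)) = x.seg m m :=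
  x.range_seg m (m + p) (TwoGraph.aux_le_addp m p)

lemma seg_s_add (m p : ℕ × ℕ) : G.s (x.seg m (m + p)) = x.seg (m + p) (m + p) :=
  x.source_seg m (m + p) (TwoGraph.aux_le_addp m p)

/-- The fundamental commuting square: one `FStep` along the path. -/
lemma fstep_seg (m : ℕ × ℕ) :
    G.FStep (x.seg (m + (0, 1)) (m + (0, 1) + (1, 0))) (x.seg m (m + (1, 0))) := by
  have h11 : m + (0, 1) + (1, 0) = m + (1, 1) := by cases m; simp [Prod.ext_iff] <;> omega
  have h11' : m + (1, 0) + (0, 1) = m + (1, 1) := by cases m; simp [Prod.ext_iff] <;> omega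
  refine ⟨?_, ?_, x.seg m (m + (0, 1)), x.seg (m + (1, 0)) (m + (1, 0) + (0, 1)),
    seg_red_edge x m, seg_red_edge x (m + (1, 0)), ?_, ?_, ?_⟩
  · rw [h11]
    have : G.d (x.seg (m + (0, 1)) (m + (1, 1))) = (1, 0) := by
      rw [← h11]; exact seg_d_add x (m + (0, 1)) (1, 0)
    rw [TwoGraph.IsBlue, this]
  · have := seg_blue_edge x m
    rw [TwoGraph.IsBlue, this]
  · rw [seg_s_add x m (0, 1), x.range_seg (m + (0, 1)) (m + (0, 1) + (1, 0))
      (TwoGraph.aux_le_addp _ _)]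
  · rw [seg_s_add x m (1, 0), seg_r_add x (m + (1, 0)) (0, 1)]
  · rw [h11]
    have hle1 : m ≤ m + (0, 1) := TwoGraph.aux_le_addp _ _
    have hle2 : m + (0, 1) ≤ m + (1, 1) := by cases m; simp [Prod.le_def] <;> omega
    have hle3 : m ≤ m + (1, 0) := TwoGraph.aux_le_addp _ _
    have hle4 : m + (1, 0) ≤ m + (1, 1) := by cases m; simp [Prod.le_def] <;> omega
    rw [x.comp_seg m (m + (0, 1)) (m + (1, 1)) hle1 hle2]
    rw [h11']
    rw [x.comp_seg m (m + (1, 0)) (m + (1, 1)) hle3 hle4]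

/-- Iterated `FStep` chain along the red direction. -/
lemma fiter_seg (m : ℕ × ℕ) :
    ∀ (a b : ℕ), G.FIter a (x.seg (m + (0, b + a)) (m + (0, b + a) + (1, 0)))
      (x.seg (m + (0, b)) (m + (0, b) + (1, 0)))
  | 0, b => by rw [Nat.add_zero]; rfl
  | a + 1, b => by
      have hidx : m + (0, b + a) + (0, 1) = m + (0, b + (a + 1)) := by
        cases m; simp [Prod.ext_iff] <;> omega
      refine ⟨x.seg (m + (0, b + a)) (m + (0, b + a) + (1, 0)), ?_, fiter_seg m a b⟩
      have := fstep_seg x (m + (0, b + a))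
      rw [hidx] at this
      exact this

end Stmt15Aux

section Stmt15Key

variable {G : TwoGraph}

/-- The next vertex in the red direction is determined by the current one. -/
lemma vstep (hred : ∀ v, G.IsVertex v → ∃ lam, G.IsIsolatedRedCycle lam ∧ G.r lam = v)
    (x : InfPath G) {m m' : ℕ × ℕ} (h : x.seg m m = x.seg m' m') :
    x.seg (m + (0, 1)) (m + (0, 1)) = x.seg (m' + (0, 1)) (m' + (0, 1)) := by
  have hf : x.seg m (m + (0, 1)) = x.seg m' (m' + (0, 1)) := by
    refine TwoGraph.red_range_unique hred (seg_vertex x m) (seg_red_edge x m)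
      (seg_red_edge x m') (seg_r_add x m (0, 1)) ?_
    rw [seg_r_add x m' (0, 1), h]
  have := congrArg G.s hf
  rwa [seg_s_add x m (0, 1), seg_s_add x m' (0, 1)] at this

/-- Travelling once around the red cycle returns to the starting vertex. -/
lemma vret (hred : ∀ v, G.IsVertex v → ∃ lam, G.IsIsolatedRedCycle lam ∧ G.r lam = v)
    (x : InfPath G) (m : ℕ × ℕ) :
    ∃ c : ℕ, 0 < c ∧ x.seg (m + (0, c)) (m + (0, c)) = x.seg m m := by
  obtain ⟨lam, ⟨hredl, hcyc, hne, _⟩, hrl⟩ := hred (x.seg m m) (seg_vertex x m)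
  rcases hd : G.d lam with ⟨a, c⟩
  have ha : a = 0 := by have := hredl; rw [TwoGraph.IsRed, hd] at this; exact this
  subst ha
  have hc : 0 < c := by
    rcases Nat.eq_zero_or_pos c with h | h
    · exfalso; apply hcyc.1; rw [hd, h]; rfl
    · exact h
  refine ⟨c, hc, ?_⟩
  have hdρ : G.d (x.seg m (m + (0, c))) = (0, c) := seg_d_add x m (0, c)
  obtain ⟨ν, hsν, hcν⟩ := hne (0, c) (le_of_eq hd.symm) (x.seg m (m + (0, c)))
    hdρ (by rw [seg_r_add x m (0, c), hrl])
  have hdν : G.d ν = 0 := by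
    have h1 : G.d lam = G.d (x.seg m (m + (0, c))) + G.d ν := by
      rw [← hcν]; exact G.d_comp _ _ hsν
    rw [hd, hdρ] at h1
    rcases hdn : G.d ν with ⟨p, q⟩
    rw [hdn] at h1
    simp [Prod.ext_iff] at h1 ⊢
    omega
  have hν : ν = G.s (x.seg m (m + (0, c))) := by
    rw [← G.r_vertex ν hdν, ← hsν]
  have hρlam : x.seg m (m + (0, c)) = lam := by
    rw [← hcν, hν, G.comp_id]
  have : G.s (x.seg m (m + (0, c))) = x.seg m m := by
    rw [hρlam, ← hcyc.2.1, hrl]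
  rwa [seg_s_add x m (0, c)] at this

/-- Key lemma: blue edges along the infinite path are `l!`-periodic in the red direction. -/
lemma keyB (hred : ∀ v, G.IsVertex v → ∃ lam, G.IsIsolatedRedCycle lam ∧ G.r lam = v)
    (x : InfPath G) (hrf : G.RowFinite)
    (l : ℕ) (hbd : ∀ e, G.IsBlueEdge e → ∀ k, G.HasOrder e k → k ≤ l)
    (m : ℕ × ℕ) :
    x.seg (m + (0, Nat.factorial l)) (m + (0, Nat.factorial l) + (1, 0)) =
      x.seg m (m + (1, 0)) := by
  classical
  set v : ℕ → G.Path := fun k => x.seg (m + (0, k)) (m + (0, k)) with hv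
  set b : ℕ → G.Path := fun k => x.seg (m + (0, k)) (m + (0, k) + (1, 0)) with hb
  obtain ⟨c, hc, hvc⟩ := vret hred x (m + (0, 0))
  have hidx0 : m + ((0 : ℕ), (0 : ℕ)) = m := by cases m; simp [Prod.ext_iff] <;> omega
  have hidx : ∀ k : ℕ, m + (0, k) + (0, 1) = m + (0, k + 1) := by
    intro k; cases m; simp [Prod.ext_iff] <;> omega
  have hvc' : v c = v 0 := by
    have h2 : m + (0, 0) + ((0 : ℕ), c) = m + (0, c) := by cases m; simp [Prod.ext_iff] <;> omega
    rw [hv]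
    simpa [h2, hidx0] using hvc
  have hper : ∀ k, v (k + c) = v k := by
    intro k
    induction k with
    | zero => simpa using hvc'
    | succ k ih =>
        have := vstep hred x (m := m + (0, k + c)) (m' := m + (0, k)) ih
        rw [hidx (k + c), hidx k] at this
        have hkc : k + c + 1 = k + 1 + c := by omega
        rwa [hkc] at this
  have hmul : ∀ (q r : ℕ), v (r + q * c) = v r := by
    intro q
    induction q with
    | zero => intro r; simp
    | succ q ih =>
        intro r
        have : r + (q + 1) * c = (r + q * c) + c := by ring
        rw [this, hper, ih]
  have hmod : ∀ k, v k = v (k % c) := by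
    intro k
    conv_lhs => rw [← Nat.mod_add_div' k c]
    exact hmul (k / c) (k % c)
  -- finiteness of the blue-edge values
  have hT : Set.Finite (⋃ i ∈ Set.Iio c, {p : G.Path | G.r p = v i ∧ G.d p = (1, 0)}) :=
    (Set.finite_Iio c).biUnion fun i _ => hrf (v i) (1, 0) (seg_vertex x _)
  have hbmem : ∀ k, b k ∈ ⋃ i ∈ Set.Iio c, {p : G.Path | G.r p = v i ∧ G.d p = (1, 0)} := by
    intro k
    refine Set.mem_biUnion (Nat.mod_lt k hc) ⟨?_, seg_d_add x _ (1, 0)⟩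
    rw [hb]
    simp only
    rw [seg_r_add x (m + (0, k)) (1, 0), ← hmod k]
  -- pigeonhole
  obtain ⟨a1, -, a2, -, hne12, heq⟩ :=
    Set.infinite_univ.exists_ne_map_eq_of_mapsTo
      (f := fun k : ℕ => b (k + Nat.factorial l)) (fun k _ => hbmem _) hT
  -- wlog a1 < a2
  obtain ⟨i, j, hij, hilf, hbij⟩ :
      ∃ i j : ℕ, i < j ∧ Nat.factorial l ≤ i ∧ b i = b j := by
    rcases Nat.lt_or_ge a1 a2 with h | h
    · exact ⟨a1 + Nat.factorial l, a2 + Nat.factorial l, by omega, by omega, heq⟩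
    · have h' : a2 < a1 := by omega
      exact ⟨a2 + Nat.factorial l, a1 + Nat.factorial l, by omega, by omega, heq.symm⟩
  -- FIter chain facts
  have hchain : ∀ (a bb : ℕ), G.FIter a (b (bb + a)) (b bb) := by
    intro a bb
    exact fiter_seg x m a bb
  set α : G.Path := b j with hα
  have hp : G.FIter (j - i) α α := by
    have h0 := hchain (j - i) i
    have hji : i + (j - i) = j := by omega
    rw [hji] at h0
    rw [hbij] at h0
    exact h0
  have hQ : ∃ k : ℕ, 0 < k ∧ G.FIter k α α := ⟨j - i, by omega, hp⟩
  set k₀ : ℕ := Nat.find hQ with hk₀def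
  have hk₀ := Nat.find_spec hQ
  have hord : G.HasOrder α k₀ :=
    ⟨hk₀.1, hk₀.2, fun mm hm1 hm2 hmf => Nat.find_min hQ hm2 ⟨hm1, hmf⟩⟩
  have hαblue : G.IsBlueEdge α := seg_blue_edge x _
  have hk₀l : k₀ ≤ l := hbd α hαblue k₀ hord
  have hdvd : k₀ ∣ Nat.factorial l := Nat.dvd_factorial hk₀.1 hk₀l
  have hfl : G.FIter (Nat.factorial l) α α := by
    obtain ⟨t, ht⟩ := hdvd
    rw [ht]
    exact TwoGraph.fiter_self_mul hk₀.2 t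
  have h1 : G.FIter j α (b 0) := by
    have := hchain j 0
    rwa [Nat.zero_add] at this
  have h2 : G.FIter (j - Nat.factorial l) α (b (Nat.factorial l)) := by
    have := hchain (j - Nat.factorial l) (Nat.factorial l)
    have hj : Nat.factorial l + (j - Nat.factorial l) = j := by omega
    rwa [hj] at this
  have h3 : G.FIter j α (b (Nat.factorial l)) := by
    have := TwoGraph.fiter_comp (Nat.factorial l) hfl h2
    have hj : Nat.factorial l + (j - Nat.factorial l) = j := by omega
    rwa [hj] at this
  have hfinal : b (Nat.factorial l) = b 0 := TwoGraph.fiter_det hred j h3 h1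
  rw [hb] at hfinal
  simp only at hfinal
  rwa [hidx0] at hfinal

/-- Vertices are `l!`-periodic. -/
lemma keyV (hred : ∀ v, G.IsVertex v → ∃ lam, G.IsIsolatedRedCycle lam ∧ G.r lam = v)
    (x : InfPath G) (hrf : G.RowFinite)
    (l : ℕ) (hbd : ∀ e, G.IsBlueEdge e → ∀ k, G.HasOrder e k → k ≤ l)
    (m : ℕ × ℕ) :
    x.seg (m + (0, Nat.factorial l)) (m + (0, Nat.factorial l)) = x.seg m m := by
  have := congrArg G.r (keyB hred x hrf l hbd m)
  rwa [seg_r_add x (m + (0, Nat.factorial l)) (1, 0), seg_r_add x m (1, 0)] at this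

/-- Red edges are `l!`-periodic. -/
lemma keyR (hred : ∀ v, G.IsVertex v → ∃ lam, G.IsIsolatedRedCycle lam ∧ G.r lam = v)
    (x : InfPath G) (hrf : G.RowFinite)
    (l : ℕ) (hbd : ∀ e, G.IsBlueEdge e → ∀ k, G.HasOrder e k → k ≤ l)
    (m : ℕ × ℕ) :
    x.seg (m + (0, Nat.factorial l)) (m + (0, Nat.factorial l) + (0, 1)) =
      x.seg m (m + (0, 1)) := by
  refine TwoGraph.red_range_unique hred (seg_vertex x m)
    (seg_red_edge x (m + (0, Nat.factorial l))) (seg_red_edge x m) ?_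
    (seg_r_add x m (0, 1))
  rw [seg_r_add x (m + (0, Nat.factorial l)) (0, 1)]
  exact keyV hred x hrf l hbd m

end Stmt15Key

/-- If every blue edge has order at most `l`, then every infinite path
satisfies `σ^{l! e₂}(x) = x`. -/
theorem stmt15 (G : TwoGraph) (V : ℕ → Set G.Path) (hGBD : IsGBD G ⊤ V)
    (l : ℕ) (hbd : ∀ e, G.IsBlueEdge e → ∀ k, G.HasOrder e k → k ≤ l)
    (x : InfPath G) :
    ∀ m n : ℕ × ℕ, m ≤ n →
      x.seg (m + (0, Nat.factorial l)) (n + (0, Nat.factorial l)) = x.seg m n := by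
  have hred := hGBD.red_cycle
  have hrf := hGBD.rowFinite
  set P : ℕ × ℕ := ((0 : ℕ), Nat.factorial l) with hP
  suffices H : ∀ k : ℕ, ∀ m n : ℕ × ℕ, m ≤ n →
      (n.1 - m.1) + (n.2 - m.2) = k → x.seg (m + P) (n + P) = x.seg m n by
    intro m n hmn
    exact H ((n.1 - m.1) + (n.2 - m.2)) m n hmn rfl
  intro k
  induction k using Nat.strong_induction_on with
  | _ k IH =>
    intro m n hmn hk
    rcases Prod.le_def.mp hmn with ⟨hmn1, hmn2⟩
    rcases Nat.lt_or_ge m.1 n.1 with h1 | h1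
    · -- peel off a blue edge
      have hm'le : m + (1, 0) ≤ n := by
        cases m; cases n
        simp [Prod.le_def] at hmn1 hmn2 h1 ⊢
        omega
      have hcomm : m + P + (1, 0) = m + (1, 0) + P := by
        cases m; simp [Prod.ext_iff] <;> omega
      have hm'leP : m + (1, 0) + P ≤ n + P := by
        cases m; cases n
        simp [Prod.le_def] at hm'le ⊢
        omega
      have e1 : x.seg m n = G.comp (x.seg m (m + (1, 0))) (x.seg (m + (1, 0)) n) :=
        (x.comp_seg m (m + (1, 0)) n (TwoGraph.aux_le_addp m (1, 0)) hm'le).symm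
      have e2 : x.seg (m + P) (n + P) =
          G.comp (x.seg (m + P) (m + P + (1, 0))) (x.seg (m + (1, 0) + P) (n + P)) := by
        rw [hcomm]
        exact (x.comp_seg (m + P) (m + (1, 0) + P) (n + P)
          (hcomm ▸ TwoGraph.aux_le_addp (m + P) (1, 0)) hm'leP).symm
      have hB := keyB hred x hrf l hbd m
      have hIH : x.seg (m + (1, 0) + P) (n + P) = x.seg (m + (1, 0)) n := by
        refine IH ((n.1 - (m + (1, 0)).1) + (n.2 - (m + (1, 0)).2)) ?_ (m + (1, 0)) n hm'le rfl
        cases m; cases n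
        simp at h1 hk ⊢
        omega
      rw [e1, e2, hB, hIH]
    · -- first coordinates are equal
      have h1' : m.1 = n.1 := le_antisymm hmn1 h1
      rcases Nat.lt_or_ge m.2 n.2 with h2 | h2
      · -- peel off a red edge
        have hm'le : m + (0, 1) ≤ n := by
          cases m; cases n
          simp [Prod.le_def] at h1' h2 ⊢
          omega
        have hcomm : m + P + (0, 1) = m + (0, 1) + P := by
          cases m; simp [Prod.ext_iff] <;> omega
        have hm'leP : m + (0, 1) + P ≤ n + P := by
          cases m; cases n
          simp [Prod.le_def] at hm'le ⊢
          omega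
        have e1 : x.seg m n = G.comp (x.seg m (m + (0, 1))) (x.seg (m + (0, 1)) n) :=
          (x.comp_seg m (m + (0, 1)) n (TwoGraph.aux_le_addp m (0, 1)) hm'le).symm
        have e2 : x.seg (m + P) (n + P) =
            G.comp (x.seg (m + P) (m + P + (0, 1))) (x.seg (m + (0, 1) + P) (n + P)) := by
          rw [hcomm]
          exact (x.comp_seg (m + P) (m + (0, 1) + P) (n + P)
            (hcomm ▸ TwoGraph.aux_le_addp (m + P) (0, 1)) hm'leP).symm
        have hR := keyR hred x hrf l hbd m
        have hIH : x.seg (m + (0, 1) + P) (n + P) = x.seg (m + (0, 1)) n := by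
          refine IH ((n.1 - (m + (0, 1)).1) + (n.2 - (m + (0, 1)).2)) ?_ (m + (0, 1)) n hm'le rfl
          cases m; cases n
          simp at h2 hk ⊢
          omega
        rw [e1, e2, hR, hIH]
      · -- m = n : vertex case
        have h2' : m.2 = n.2 := le_antisymm hmn2 h2
        have hmn' : m = n := Prod.ext h1' h2'
        subst hmn'
        exact keyV hred x hrf l hbd m
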